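/- Let N ≥ 2, 1 ≤ M < N, and D ≥ 1 be integers. The equation H_1(τ) = H_2(τ) has a unique solution τ* in the interval (0,1), and τ* is the unique maximizer of P_D on [0,1]: P_D(τ*) > P_D(τ) for every τ ∈ [0,1] with τ ≠ τ*. -/

import Mathlib

/-! `P = q · f1` with `q τ = 1 - (1 - τ)^D` vanishes at `0` and `1` and is positive in between.
Its log-derivative is `(log q)' + (log f1)'`. The first summand is strictly decreasing. The
second is decreasing because `f1 τ = ∫_τ^1 w` with `w = -f1'` a multiple of the Bernstein
polynomial `b_{N-2,M-1}`, which is log-concave, and tails of log-concave densities are log-concave.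
Hence `P` has exactly one critical point in `(0,1)`, which is its strict maximum on `[0,1]`.
Finally `H1 - H2 = τ(1-τ)(log P)'`, so the critical points of `P` are exactly the solutions of
`H1 = H2`. -/

open Finset Set

noncomputable def f1 (N M : ℕ) (τ : ℝ) : ℝ :=
  ∑ i ∈ range M, ((N-1).choose i : ℝ) * τ^i * (1-τ)^(N-1-i)

noncomputable def f2 (N M : ℕ) (τ : ℝ) : ℝ :=
  ∑ i ∈ range M, (i : ℝ) * ((N-1).choose i : ℝ) * τ^i * (1-τ)^(N-1-i)

noncomputable def H1 (N M : ℕ) (τ : ℝ) : ℝ := f2 N M τ / f1 N M τ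

noncomputable def H2 (N D : ℕ) (τ : ℝ) : ℝ :=
  τ * ((N:ℝ) + (D:ℝ) - 1 - (D:ℝ) / (1 - (1-τ)^D))

noncomputable def P (N M D : ℕ) (τ : ℝ) : ℝ := (1 - (1 - τ)^D) * f1 N M τ

open Polynomial

namespace bernsteinPolynomial

variable {R : Type*} [CommRing R]

theorem X_mul_one_sub_X_mul_derivative (n ν : ℕ) :
    X * (1 - X) * derivative (bernsteinPolynomial R n ν) =
      ((ν : R[X]) - (n : R[X]) * X) * bernsteinPolynomial R n ν := by
  rcases lt_or_ge n ν with h | h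
  · simp [eq_zero_of_lt R h]
  obtain ⟨k, rfl⟩ := Nat.exists_eq_add_of_le h
  rcases ν with _ | j <;> rcases k with _ | l <;>
    simp [bernsteinPolynomial, derivative_pow] <;> ring

theorem derivative_sum_range_succ (n m : ℕ) :
    derivative (∑ ν ∈ range (m + 1), bernsteinPolynomial R n ν) =
      -(n * bernsteinPolynomial R (n - 1) m) := by
  induction m with
  | zero => simp [bernsteinPolynomial.derivative_zero]
  | succ m ih => rw [sum_range_succ, derivative_add, ih, derivative_succ]; ring

theorem sum_natCast_mul (n : ℕ) (s : Finset ℕ) :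
    ∑ ν ∈ s, (ν : R[X]) * bernsteinPolynomial R n ν =
      X * (1 - X) * derivative (∑ ν ∈ s, bernsteinPolynomial R n ν) +
        (n : R[X]) * X * ∑ ν ∈ s, bernsteinPolynomial R n ν := by
  rw [derivative_sum, mul_sum, mul_sum, ← sum_add_distrib]
  refine sum_congr rfl fun ν _ => ?_
  rw [X_mul_one_sub_X_mul_derivative]
  ring

theorem eval_nonneg (n ν : ℕ) {x : ℝ} (h0 : 0 ≤ x) (h1 : x ≤ 1) :
    0 ≤ (bernsteinPolynomial ℝ n ν).eval x := by
  have : 0 ≤ 1 - x := by linarith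
  simp only [bernsteinPolynomial, eval_mul, eval_pow, eval_sub, eval_one, eval_X, eval_natCast]
  positivity

end bernsteinPolynomial

section LogConcavity

variable {F w w' : ℝ → ℝ}

theorem deriv_mul_le_of_pearson {α β : ℝ} (hα : 0 ≤ α) (hαβ : α ≤ β)
    (hw : ∀ x, x * (1 - x) * w' x = (α - β * x) * w x) (hw0 : ∀ x ∈ Ioo (0 : ℝ) 1, 0 ≤ w x)
    {t s : ℝ} (ht : 0 < t) (hts : t ≤ s) (hs : s < 1) : w' s * w t ≤ w' t * w s := by
  have hs0 : 0 < s := ht.trans_le hts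
  have ht1 : t < 1 := hts.trans_lt hs
  have hlogDeriv : ∀ x, 0 < x → x < 1 → w' x = (α / x - (β - α) / (1 - x)) * w x := by
    intro x hx0 hx1
    have : 0 < 1 - x := by linarith
    field_simp
    linear_combination hw x
  have hanti : α / s - (β - α) / (1 - s) ≤ α / t - (β - α) / (1 - t) := by
    have : 0 < 1 - s := by linarith
    gcongr
  rw [hlogDeriv s hs0 hs, hlogDeriv t ht ht1]
  have := mul_nonneg (hw0 s ⟨hs0, hs⟩) (hw0 t ⟨ht, ht1⟩)
  nlinarith

theorem sq_add_mul_nonneg_of_hasDerivAt {t b : ℝ} (htb : t ≤ b)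
    (hF : ∀ x, HasDerivAt F (-w x) x) (hw : ∀ x, HasDerivAt w (w' x) x) (hFb : F b = 0)
    (hwb : 0 ≤ w b * w t) (hlc : ∀ s ∈ Ioo t b, w' s * w t ≤ w' t * w s) :
    0 ≤ w t ^ 2 + w' t * F t := by
  -- `g' ≤ 0` on `(t, b)` by `hlc`, and `g b ≤ g t` is the claim up to `0 ≤ w b * w t`.
  set g : ℝ → ℝ := fun s => w s * w t + w' t * F s
  have hg : ∀ s, HasDerivAt g (w' s * w t - w' t * w s) s := fun s =>
    (((hw s).mul_const (w t)).add ((hF s).const_mul (w' t))).congr_deriv (by ring)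
  have hanti : AntitoneOn g (Icc t b) :=
    antitoneOn_of_deriv_nonpos (convex_Icc t b)
      (fun s _ => (hg s).continuousAt.continuousWithinAt)
      (fun s _ => (hg s).differentiableAt.differentiableWithinAt)
      (fun s hs => by
        rw [interior_Icc] at hs
        rw [(hg s).deriv]
        linarith [hlc s hs])
  have := hanti (left_mem_Icc.2 htb) (right_mem_Icc.2 htb) htb
  simp only [g, hFb, mul_zero, add_zero] at this
  nlinarith

theorem antitoneOn_logDeriv_of_hasDerivAt {a b : ℝ}
    (hF : ∀ x, HasDerivAt F (-w x) x) (hw : ∀ x, HasDerivAt w (w' x) x) (hFb : F b = 0)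
    (hFpos : ∀ x ∈ Ioo a b, 0 < F x) (hwb : 0 ≤ w b) (hw0 : ∀ x ∈ Ioo a b, 0 ≤ w x)
    (hlc : ∀ t ∈ Ioo a b, ∀ s ∈ Ioo t b, w' s * w t ≤ w' t * w s) :
    AntitoneOn (logDeriv F) (Ioo a b) := by
  have hquot : ∀ x ∈ Ioo a b,
      HasDerivAt (fun x => -w x / F x) (-(w x ^ 2 + w' x * F x) / F x ^ 2) x := fun x hx =>
    ((hw x).neg.div (hF x) (hFpos x hx).ne').congr_deriv (by rw [Pi.neg_apply]; ring)
  have hanti : AntitoneOn (fun x => -w x / F x) (Ioo a b) :=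
    antitoneOn_of_deriv_nonpos (convex_Ioo a b)
      (fun x hx => (hquot x hx).continuousAt.continuousWithinAt)
      (fun x hx => (hquot x (interior_subset hx)).differentiableAt.differentiableWithinAt)
      (fun x hx => by
        rw [interior_Ioo] at hx
        rw [(hquot x hx).deriv]
        have := sq_add_mul_nonneg_of_hasDerivAt hx.2.le hF hw hFb
          (mul_nonneg hwb (hw0 x hx)) (hlc x hx)
        exact div_nonpos_of_nonpos_of_nonneg (by linarith) (sq_nonneg _))
  intro x hx y hy hxy
  simpa only [logDeriv_apply, (hF _).deriv, neg_div] using hanti hx hy hxy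

theorem exists_logDeriv_eq_zero_and_lt {f : ℝ → ℝ} {a b : ℝ} (hab : a < b)
    (hf : ContinuousOn f (Icc a b)) (hfab : f a = f b) (hpos : ∀ x ∈ Ioo a b, 0 < f x)
    (hanti : StrictAntiOn (logDeriv f) (Ioo a b)) :
    ∃ c ∈ Ioo a b, logDeriv f c = 0 ∧ ∀ x ∈ Icc a b, x ≠ c → f x < f c := by
  obtain ⟨c, hc, hc0⟩ := exists_deriv_eq_zero hab hf hfab
  have hlogc : logDeriv f c = 0 := by rw [logDeriv_apply, hc0, zero_div]
  have hderiv : ∀ x ∈ Ioo a b, deriv f x = f x * logDeriv f x := fun x hx => by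
    rw [logDeriv_apply, mul_div_cancel₀ _ (hpos x hx).ne']
  refine ⟨c, hc, hlogc, fun x hx hxc => ?_⟩
  rcases hxc.lt_or_gt with hlt | hgt
  · refine strictMonoOn_of_deriv_pos (convex_Icc x c) (hf.mono (Icc_subset_Icc hx.1 hc.2.le))
      (fun y hy => ?_) (left_mem_Icc.2 hlt.le) (right_mem_Icc.2 hlt.le) hlt
    rw [interior_Icc] at hy
    have hy' : y ∈ Ioo a b := ⟨hx.1.trans_lt hy.1, hy.2.trans hc.2⟩
    rw [hderiv y hy']
    exact mul_pos (hpos y hy') (hlogc ▸ hanti hy' hc hy.2)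
  · refine strictAntiOn_of_deriv_neg (convex_Icc c x) (hf.mono (Icc_subset_Icc hc.1.le hx.2))
      (fun y hy => ?_) (left_mem_Icc.2 hgt.le) (right_mem_Icc.2 hgt.le) hgt
    rw [interior_Icc] at hy
    have hy' : y ∈ Ioo a b := ⟨hc.1.trans hy.1, hy.2.trans_le hx.2⟩
    rw [hderiv y hy']
    exact mul_neg_of_pos_of_neg (hpos y hy') (hlogc ▸ hanti hc hy' hy.1)

end LogConcavity

noncomputable def binomialLowerTail (n m : ℕ) : ℝ[X] :=
  ∑ ν ∈ range m, bernsteinPolynomial ℝ n ν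

noncomputable def tailDensity (N M : ℕ) : ℝ[X] :=
  ((N - 1 : ℕ) : ℝ[X]) * bernsteinPolynomial ℝ (N - 2) (M - 1)

noncomputable def transmitProb (D : ℕ) (τ : ℝ) : ℝ := 1 - (1 - τ) ^ D

variable {N M D : ℕ}

theorem f1_eq_eval : f1 N M = fun τ => (binomialLowerTail (N - 1) M).eval τ := by
  ext τ
  simp [f1, binomialLowerTail, bernsteinPolynomial, eval_finsetSum]

theorem f2_eq_deriv_f1 (τ : ℝ) :
    f2 N M τ = τ * (1 - τ) * deriv (f1 N M) τ + (N - 1 : ℕ) * τ * f1 N M τ := by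
  have hf2 :
      f2 N M τ = eval τ (∑ ν ∈ range M, (ν : ℝ[X]) * bernsteinPolynomial ℝ (N - 1) ν) := by
    simp [f2, bernsteinPolynomial, eval_finsetSum, mul_assoc]
  rw [hf2, bernsteinPolynomial.sum_natCast_mul, f1_eq_eval, Polynomial.deriv, binomialLowerTail]
  simp

theorem derivative_binomialLowerTail (hM : 1 ≤ M) :
    derivative (binomialLowerTail (N - 1) M) = -tailDensity N M := by
  obtain ⟨m, rfl⟩ := Nat.exists_eq_add_of_le' hM
  rw [binomialLowerTail, bernsteinPolynomial.derivative_sum_range_succ, tailDensity,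
    Nat.sub_sub, Nat.add_sub_cancel]

theorem hasDerivAt_f1 (hM : 1 ≤ M) (τ : ℝ) :
    HasDerivAt (f1 N M) (-(tailDensity N M).eval τ) τ := by
  rw [f1_eq_eval, ← eval_neg, ← derivative_binomialLowerTail hM]
  exact Polynomial.hasDerivAt _ τ

theorem f1_one (hMN : M < N) : f1 N M 1 = 0 := by
  simp only [f1_eq_eval, binomialLowerTail, eval_finsetSum]
  refine sum_eq_zero fun i hi => ?_
  rw [bernsteinPolynomial.eval_at_1, if_neg (by have := mem_range.1 hi; omega)]

theorem f1_pos (hM : 1 ≤ M) {τ : ℝ} (h0 : 0 ≤ τ) (h1 : τ < 1) : 0 < f1 N M τ := by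
  simp only [f1_eq_eval, binomialLowerTail, eval_finsetSum]
  refine lt_of_lt_of_le ?_
    (single_le_sum (fun i _ => bernsteinPolynomial.eval_nonneg _ i h0 h1.le) (mem_range.2 hM))
  simpa [bernsteinPolynomial] using pow_pos (sub_pos.2 h1) (N - 1)

theorem tailDensity_nonneg {x : ℝ} (h0 : 0 ≤ x) (h1 : x ≤ 1) :
    0 ≤ (tailDensity N M).eval x := by
  rw [tailDensity, eval_mul, eval_natCast]
  exact mul_nonneg (Nat.cast_nonneg _) (bernsteinPolynomial.eval_nonneg _ _ h0 h1)

theorem pearson_tailDensity (x : ℝ) :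
    x * (1 - x) * (derivative (tailDensity N M)).eval x =
      ((M - 1 : ℕ) - (N - 2 : ℕ) * x) * (tailDensity N M).eval x := by
  have h := congrArg (eval x)
    (bernsteinPolynomial.X_mul_one_sub_X_mul_derivative (R := ℝ) (N - 2) (M - 1))
  simp only [eval_mul, eval_sub, eval_one, eval_X, eval_natCast] at h
  rw [tailDensity, derivative_natCast_mul]
  simp only [eval_mul, eval_natCast]
  linear_combination ((N - 1 : ℕ) : ℝ) * h

theorem antitoneOn_logDeriv_f1 (hM : 1 ≤ M) (hMN : M < N) :
    AntitoneOn (logDeriv (f1 N M)) (Ioo 0 1) :=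
  antitoneOn_logDeriv_of_hasDerivAt (hasDerivAt_f1 hM) (fun x => Polynomial.hasDerivAt _ x)
    (f1_one hMN) (fun x hx => f1_pos hM hx.1.le hx.2) (tailDensity_nonneg zero_le_one le_rfl)
    (fun x hx => tailDensity_nonneg hx.1.le hx.2.le)
    (fun t ht s hs => deriv_mul_le_of_pearson (Nat.cast_nonneg _) (Nat.cast_le.2 (by omega))
      pearson_tailDensity (fun x hx => tailDensity_nonneg hx.1.le hx.2.le) ht.1 hs.1.le hs.2)

theorem hasDerivAt_transmitProb (D : ℕ) (τ : ℝ) :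
    HasDerivAt (transmitProb D) (D * (1 - τ) ^ (D - 1)) τ :=
  ((((hasDerivAt_id τ).const_sub 1).pow D).const_sub 1).congr_deriv (by simp)

theorem logDeriv_transmitProb (D : ℕ) (τ : ℝ) :
    logDeriv (transmitProb D) τ = D * (1 - τ) ^ (D - 1) / transmitProb D τ := by
  rw [logDeriv_apply, (hasDerivAt_transmitProb D τ).deriv]

theorem transmitProb_pos (hD : 1 ≤ D) {τ : ℝ} (h0 : 0 < τ) (h1 : τ ≤ 1) :
    0 < transmitProb D τ := by
  rw [transmitProb, sub_pos]
  exact pow_lt_one₀ (by linarith) (by linarith) (by omega)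

theorem strictAntiOn_logDeriv_transmitProb (hD : 1 ≤ D) :
    StrictAntiOn (logDeriv (transmitProb D)) (Ioo 0 1) := by
  intro x hx y hy hxy
  rw [logDeriv_transmitProb, logDeriv_transmitProb,
    div_lt_div_iff₀ (transmitProb_pos hD hy.1 hy.2.le) (transmitProb_pos hD hx.1 hx.2.le)]
  obtain ⟨d, rfl⟩ := Nat.exists_eq_add_of_le' hD
  simp only [transmitProb, Nat.add_sub_cancel, pow_succ]
  set u := 1 - y
  set v := 1 - x
  have hu : 0 < u := sub_pos.2 hy.2
  have huv : u < v := by linarith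
  have hpow : u ^ d ≤ v ^ d := pow_le_pow_left₀ hu.le huv.le d
  have hprod : 0 < u ^ d * v ^ d * (v - u) :=
    mul_pos (mul_pos (pow_pos hu d) (pow_pos (hu.trans huv) d)) (sub_pos.2 huv)
  push_cast
  nlinarith [mul_le_mul_of_nonneg_left hpow (by positivity : (0 : ℝ) ≤ d + 1),
    mul_pos (by positivity : (0 : ℝ) < d + 1) hprod]

theorem logDeriv_P_eq_add (hM : 1 ≤ M) (hD : 1 ≤ D) {τ : ℝ} (hτ : τ ∈ Ioo (0 : ℝ) 1) :
    logDeriv (P N M D) τ = logDeriv (transmitProb D) τ + logDeriv (f1 N M) τ :=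
  logDeriv_mul τ (transmitProb_pos hD hτ.1 hτ.2.le).ne' (f1_pos hM hτ.1.le hτ.2).ne'
    (hasDerivAt_transmitProb D τ).differentiableAt (hasDerivAt_f1 hM τ).differentiableAt

theorem strictAntiOn_logDeriv_P (hM : 1 ≤ M) (hMN : M < N) (hD : 1 ≤ D) :
    StrictAntiOn (logDeriv (P N M D)) (Ioo 0 1) := by
  refine ((strictAntiOn_logDeriv_transmitProb hD).add_antitone
    (antitoneOn_logDeriv_f1 hM hMN)).congr fun τ hτ => ?_
  exact (logDeriv_P_eq_add hM hD hτ).symm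

theorem H1_sub_H2 (hM : 1 ≤ M) (hMN : M < N) (hD : 1 ≤ D) {τ : ℝ} (hτ : τ ∈ Ioo (0 : ℝ) 1) :
    H1 N M τ - H2 N D τ = τ * (1 - τ) * logDeriv (P N M D) τ := by
  have hq := (transmitProb_pos hD hτ.1 hτ.2.le).ne'
  have hf := (f1_pos (N := N) hM hτ.1.le hτ.2).ne'
  rw [logDeriv_P_eq_add hM hD hτ, logDeriv_transmitProb, logDeriv_apply (f1 N M), H1, H2,
    f2_eq_deriv_f1, Nat.cast_sub (by omega : 1 ≤ N)]
  obtain ⟨d, rfl⟩ := Nat.exists_eq_add_of_le' hD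
  simp only [transmitProb, Nat.add_sub_cancel] at hq ⊢
  field_simp
  ring

theorem stmt13_general (N M D : ℕ) (hM : 1 ≤ M) (hMN : M < N) (hD : 1 ≤ D) :
    ∃ τs ∈ Ioo (0:ℝ) 1,
      H1 N M τs = H2 N D τs ∧
      (∀ τ ∈ Ioo (0:ℝ) 1, H1 N M τ = H2 N D τ → τ = τs) ∧
      (∀ τ ∈ Icc (0:ℝ) 1, τ ≠ τs → P N M D τ < P N M D τs) := by
  have hcont : Continuous (P N M D) := by unfold P f1; fun_prop
  have hends : P N M D 0 = P N M D 1 := by simp [P, f1_one hMN]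
  have hpos : ∀ τ ∈ Ioo (0 : ℝ) 1, 0 < P N M D τ := fun τ hτ =>
    mul_pos (transmitProb_pos hD hτ.1 hτ.2.le) (f1_pos hM hτ.1.le hτ.2)
  have hanti := strictAntiOn_logDeriv_P hM hMN hD
  obtain ⟨c, hc, hc0, hmax⟩ :=
    exists_logDeriv_eq_zero_and_lt zero_lt_one hcont.continuousOn hends hpos hanti
  have hcrit : ∀ τ ∈ Ioo (0 : ℝ) 1, H1 N M τ = H2 N D τ ↔ logDeriv (P N M D) τ = 0 :=
    fun τ hτ => by
      rw [← sub_eq_zero, H1_sub_H2 hM hMN hD hτ, mul_eq_zero,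
        or_iff_right (mul_pos hτ.1 (sub_pos.2 hτ.2)).ne']
  exact ⟨c, hc, (hcrit c hc).2 hc0,
    fun τ hτ h => hanti.injOn hτ hc (((hcrit τ hτ).1 h).trans hc0.symm), hmax⟩

theorem stmt13 (N M D : ℕ) (hN : 2 ≤ N) (hM : 1 ≤ M) (hMN : M < N) (hD : 1 ≤ D) :
    ∃ τs ∈ Ioo (0:ℝ) 1,
      H1 N M τs = H2 N D τs ∧
      (∀ τ ∈ Ioo (0:ℝ) 1, H1 N M τ = H2 N D τ → τ = τs) ∧
      (∀ τ ∈ Icc (0:ℝ) 1, τ ≠ τs → P N M D τ < P N M D τs) :=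
  stmt13_general N M D hM hMN hD
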